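/- Let T ⊂ ℝ³ with marked point x_T and ℓ ≥ 0. Then P^ℓ(T)³ = R^ℓ(T) ⊕ R^{c,ℓ}(T) where R^ℓ(T) = curl P^{ℓ+1}(T)³ and R^{c,ℓ}(T) = (x - x_T) P^{ℓ-1}(T). -/

import Mathlib

open MvPolynomial

/-- ℝ³-valued polynomials of total degree ≤ ℓ on an element `T ⊂ ℝ³`. -/
def PvecT (ℓ : ℕ) : Set ((Fin 3 → ℝ) → (Fin 3 → ℝ)) :=
  {v | ∃ p : Fin 3 → MvPolynomial (Fin 3) ℝ,
    (∀ i, (p i).totalDegree ≤ ℓ) ∧ ∀ x i, v x i = eval x (p i)}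

/-- `R^ℓ(T) = curl P^{ℓ+1}(T)³`. -/
def RolyT (ℓ : ℕ) : Set ((Fin 3 → ℝ) → (Fin 3 → ℝ)) :=
  {v | ∃ w : Fin 3 → MvPolynomial (Fin 3) ℝ, (∀ i, (w i).totalDegree ≤ ℓ + 1) ∧
    ∀ x, v x 0 = eval x (pderiv 1 (w 2)) - eval x (pderiv 2 (w 1)) ∧
         v x 1 = eval x (pderiv 2 (w 0)) - eval x (pderiv 0 (w 2)) ∧
         v x 2 = eval x (pderiv 0 (w 1)) - eval x (pderiv 1 (w 0))}

/-- `R^{c,ℓ}(T) = (x - x_T) P^{ℓ-1}(T)`, with the convention `P^{-1} = {0}`. -/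
def RolyCT (ℓ : ℕ) (xT : Fin 3 → ℝ) : Set ((Fin 3 → ℝ) → (Fin 3 → ℝ)) :=
  {v | ∃ q : MvPolynomial (Fin 3) ℝ, (q.totalDegree + 1 ≤ ℓ ∨ q = 0) ∧
    ∀ x i, v x i = (x i - xT i) * eval x q}

/-!
Let `E = ∑ xᵢ ∂ᵢ` be the Euler operator. It multiplies each monomial by its degree, so for
`a > 0` the operator `a + E` is a degree-preserving bijection on polynomials. For a polynomial
field `V` one has `curl (V × x) + x div V = 2 V + E V`, and `div (x q) = 3 q + E q`.
Translate `x_T` to the origin. Then `p = curl (V × x) + x div V` with `V = (2 + E)⁻¹ p`.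
If `curl w = x q`, taking divergences gives `(3 + E) q = 0`, hence `q = 0`.
-/

namespace MvPolynomial

section Euler

variable {σ R : Type*} [Fintype σ] [CommSemiring R]

noncomputable def euler (p : MvPolynomial σ R) : MvPolynomial σ R := ∑ i, X i * pderiv i p

theorem coeff_euler (p : MvPolynomial σ R) (m : σ →₀ ℕ) :
    coeff m (euler p) = m.degree * coeff m p := by
  classical
  induction p using MvPolynomial.induction_on' with
  | monomial n a =>
    simp only [euler, X_mul_pderiv_monomial, coeff_sum, coeff_smul, coeff_monomial]
    split_ifs with h
    · subst h
      simp [Finsupp.degree_eq_sum, Finset.sum_mul, nsmul_eq_mul]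
    · simp
  | add p q hp hq =>
    simp only [euler, map_add, mul_add, Finset.sum_add_distrib, coeff_add] at hp hq ⊢
    rw [hp, hq]

variable {K : Type*} [Field K] [CharZero K]

theorem eq_zero_of_nsmul_add_euler_eq_zero {a : ℕ} (ha : a ≠ 0) {p : MvPolynomial σ K}
    (h : a • p + euler p = 0) : p = 0 := by
  ext m
  have hm := congrArg (coeff m) h
  rw [coeff_add, coeff_smul, coeff_euler, coeff_zero, nsmul_eq_mul, ← add_mul,
    ← Nat.cast_add] at hm
  exact (mul_eq_zero.mp hm).resolve_left (Nat.cast_ne_zero.mpr (by omega))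

theorem exists_nsmul_add_euler_eq {a : ℕ} (ha : a ≠ 0) (p : MvPolynomial σ K) :
    ∃ v : MvPolynomial σ K, v.totalDegree ≤ p.totalDegree ∧ a • v + euler v = p := by
  classical
  refine ⟨∑ m ∈ p.support, monomial m (coeff m p / (a + m.degree : ℕ)), ?_, ?_⟩
  · refine (totalDegree_finsetSum _ _).trans (Finset.sup_le fun m hm => ?_)
    exact (totalDegree_monomial_le _ _).trans (le_totalDegree hm)
  · ext m
    have hm : ((a + m.degree : ℕ) : K) ≠ 0 := Nat.cast_ne_zero.mpr (by omega)
    rw [coeff_add, coeff_smul, coeff_euler, nsmul_eq_mul, ← add_mul, ← Nat.cast_add]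
    simp only [coeff_sum, coeff_monomial, Finset.sum_ite_eq', mem_support_iff]
    split_ifs with hp
    · field_simp
    · rw [mul_zero, not_not.mp hp]

end Euler

section Degree

variable {σ R : Type*} [CommSemiring R]

theorem totalDegree_X_le (i : σ) : (X i : MvPolynomial σ R).totalDegree ≤ 1 :=
  (totalDegree_monomial_le _ _).trans (by simp)

theorem totalDegree_pderiv_le (i : σ) (p : MvPolynomial σ R) :
    (pderiv i p).totalDegree ≤ p.totalDegree - 1 := by
  classical
  refine Finset.sup_le fun m hm => ?_
  rw [mem_support_iff, coeff_pderiv] at hm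
  have hdeg := le_totalDegree (mem_support_iff.mpr (left_ne_zero_of_mul hm))
  rw [Finsupp.sum_add_index' (fun _ => rfl) (fun _ _ _ => rfl), Finsupp.sum_single_index rfl]
    at hdeg
  omega

theorem pderiv_eq_zero_of_totalDegree_eq_zero (i : σ) {p : MvPolynomial σ R}
    (hp : p.totalDegree = 0) : pderiv i p = 0 := by
  rw [totalDegree_eq_zero_iff_eq_C.mp hp, pderiv_C]

end Degree

section CommRing

variable {σ R : Type*} [CommRing R]

noncomputable def translate (c : σ → R) : MvPolynomial σ R →ₐ[R] MvPolynomial σ R :=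
  aeval fun i => X i + C (c i)

@[simp]
theorem translate_X (c : σ → R) (i : σ) : translate c (X i) = X i + C (c i) :=
  aeval_X _ _

@[simp]
theorem translate_C (c : σ → R) (a : R) : translate c (C a) = C a :=
  aeval_C _ _

theorem translate_comp_translate (c d : σ → R) :
    (translate c).comp (translate d) = translate (c + d) := by
  ext i
  simp [add_assoc]

theorem translate_neg_translate (c : σ → R) (p : MvPolynomial σ R) :
    translate (-c) (translate c p) = p := by
  rw [← AlgHom.comp_apply, translate_comp_translate, neg_add_cancel]
  conv_rhs => rw [← aeval_X_left_apply p]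
  simp [translate]

theorem translate_injective (c : σ → R) : Function.Injective (translate c) :=
  Function.LeftInverse.injective (translate_neg_translate c)

theorem pderiv_translate (c : σ → R) (i : σ) (p : MvPolynomial σ R) :
    pderiv i (translate c p) = translate c (pderiv i p) := by
  classical
  induction p using MvPolynomial.induction_on with
  | C a => simp
  | add p q hp hq => simp [hp, hq]
  | mul_X p j hp =>
    simp only [map_mul, pderiv_mul, hp, translate_X, map_add, pderiv_C, add_zero, pderiv_X]
    by_cases h : i = j
    · subst h
      simp
    · simp [Pi.single_eq_of_ne' h]

theorem totalDegree_translate_le (c : σ → R) (p : MvPolynomial σ R) :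
    (translate c p).totalDegree ≤ p.totalDegree := by
  conv_lhs => rw [p.as_sum]
  rw [map_sum]
  refine (totalDegree_finsetSum _ _).trans (Finset.sup_le fun m hm => ?_)
  refine le_trans ?_ (le_totalDegree hm)
  rw [translate, aeval_monomial, Finsupp.prod]
  refine (totalDegree_mul _ _).trans ?_
  rw [algebraMap_eq, totalDegree_C, zero_add]
  refine (totalDegree_finsetProd _ _).trans (Finset.sum_le_sum fun i _ => ?_)
  have h1 : (X i + C (c i) : MvPolynomial σ R).totalDegree ≤ 1 :=
    (totalDegree_add _ _).trans (max_le (totalDegree_X_le i) (by simp))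
  calc (((X i + C (c i)) ^ m i : MvPolynomial σ R)).totalDegree
      ≤ m i * (X i + C (c i) : MvPolynomial σ R).totalDegree := totalDegree_pow _ _
    _ ≤ m i := by simpa using Nat.mul_le_mul_left (m i) h1

theorem totalDegree_X_sub_C_mul_le {ℓ : ℕ} (i : σ) (a : R) {q : MvPolynomial σ R}
    (hq : q.totalDegree + 1 ≤ ℓ ∨ q = 0) : ((X i - C a) * q).totalDegree ≤ ℓ := by
  rcases hq with hq | rfl
  · have hXC : (X i - C a).totalDegree ≤ 1 :=
      (totalDegree_sub _ _).trans (max_le (totalDegree_X_le i) (by simp))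
    exact (totalDegree_mul _ _).trans (by omega)
  · simp

theorem pderiv_pderiv_comm (i j : σ) (p : MvPolynomial σ R) :
    pderiv i (pderiv j p) = pderiv j (pderiv i p) := by
  classical
  have h : ⁅pderiv i, pderiv j⁆ = (0 : Derivation R (MvPolynomial σ R) (MvPolynomial σ R)) :=
    derivation_ext fun k => by
      rw [Derivation.commutator_apply, pderiv_X, pderiv_X]
      simp [Pi.single_apply, apply_ite]
  have hp := congrArg (fun D => D p) h
  rw [Derivation.commutator_apply] at hp
  exact sub_eq_zero.mp hp

end CommRing

section VectorCalculus

open Matrix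

variable {R : Type*} [CommRing R]

noncomputable def divergence {σ : Type*} [Fintype σ] (w : σ → MvPolynomial σ R) :
    MvPolynomial σ R :=
  ∑ i, pderiv i (w i)

noncomputable def curl (w : Fin 3 → MvPolynomial (Fin 3) R) : Fin 3 → MvPolynomial (Fin 3) R :=
  ![pderiv 1 (w 2) - pderiv 2 (w 1), pderiv 2 (w 0) - pderiv 0 (w 2),
    pderiv 0 (w 1) - pderiv 1 (w 0)]

theorem divergence_X_mul {σ : Type*} [Fintype σ] (q : MvPolynomial σ R) :
    divergence (fun i => X i * q) = Fintype.card σ • q + euler q := by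
  simp [divergence, euler, Finset.sum_add_distrib, add_comm]

theorem divergence_totalDegree_add_one_le_or_eq_zero {σ : Type*} [Fintype σ] {n : ℕ}
    {V : σ → MvPolynomial σ R} (hV : ∀ i, (V i).totalDegree ≤ n) :
    (divergence V).totalDegree + 1 ≤ n ∨ divergence V = 0 := by
  cases n with
  | zero =>
    exact Or.inr (Finset.sum_eq_zero fun i _ =>
      pderiv_eq_zero_of_totalDegree_eq_zero i (Nat.le_zero.mp (hV i)))
  | succ n =>
    refine Or.inl (Nat.succ_le_succ ?_)
    refine (totalDegree_finsetSum _ _).trans (Finset.sup_le fun i _ => ?_)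
    exact (totalDegree_pderiv_le i (V i)).trans (by have := hV i; omega)

theorem divergence_curl (w : Fin 3 → MvPolynomial (Fin 3) R) : divergence (curl w) = 0 := by
  simp only [divergence, curl, Fin.sum_univ_three, Matrix.cons_val_zero, Matrix.cons_val_one,
    Matrix.cons_val_two, Matrix.head_cons, Matrix.tail_cons, map_sub]
  rw [pderiv_pderiv_comm 0 1 (w 2), pderiv_pderiv_comm 0 2 (w 1), pderiv_pderiv_comm 1 2 (w 0)]
  ring

theorem curl_sub (w w' : Fin 3 → MvPolynomial (Fin 3) R) :
    curl (w - w') = curl w - curl w' := by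
  funext j
  fin_cases j <;> simp [curl] <;> ring

theorem curl_cross_X_add_X_mul_divergence (V : Fin 3 → MvPolynomial (Fin 3) R) (j : Fin 3) :
    curl (V ⨯₃ X) j + X j * divergence V = 2 • V j + euler (V j) := by
  fin_cases j <;>
  simp [curl, cross_apply, divergence, euler, Fin.sum_univ_three] <;> ring

theorem translate_curl (c : Fin 3 → R) (w : Fin 3 → MvPolynomial (Fin 3) R) (j : Fin 3) :
    translate c (curl w j) = curl (fun i => translate c (w i)) j := by
  fin_cases j <;> simp [curl, pderiv_translate]

theorem totalDegree_curl_le {n : ℕ} {w : Fin 3 → MvPolynomial (Fin 3) R}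
    (hw : ∀ i, (w i).totalDegree ≤ n + 1) (j : Fin 3) : (curl w j).totalDegree ≤ n := by
  have h : ∀ i k, (pderiv i (w k)).totalDegree ≤ n := fun i k =>
    (totalDegree_pderiv_le i (w k)).trans (by have := hw k; omega)
  fin_cases j <;> exact (totalDegree_sub _ _).trans (max_le (h _ _) (h _ _))

theorem totalDegree_cross_X_le {n : ℕ} {V : Fin 3 → MvPolynomial (Fin 3) R}
    (hV : ∀ i, (V i).totalDegree ≤ n) (j : Fin 3) : ((V ⨯₃ X) j).totalDegree ≤ n + 1 := by
  have h : ∀ i k, (V i * X k).totalDegree ≤ n + 1 := fun i k =>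
    (totalDegree_mul _ _).trans (add_le_add (hV i) (totalDegree_X_le k))
  fin_cases j <;> exact (totalDegree_sub _ _).trans (max_le (h _ _) (h _ _))

end VectorCalculus

section Decomposition

open Matrix

variable {K : Type*} [Field K] [CharZero K]

theorem exists_eq_curl_add_X_sub_C_mul {ℓ : ℕ} (c : Fin 3 → K)
    {p : Fin 3 → MvPolynomial (Fin 3) K} (hp : ∀ j, (p j).totalDegree ≤ ℓ) :
    ∃ (w : Fin 3 → MvPolynomial (Fin 3) K) (q : MvPolynomial (Fin 3) K),
      (∀ i, (w i).totalDegree ≤ ℓ + 1) ∧ (q.totalDegree + 1 ≤ ℓ ∨ q = 0) ∧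
      ∀ j, p j = curl w j + (X j - C (c j)) * q := by
  choose V hVdeg hV using fun j => exists_nsmul_add_euler_eq two_ne_zero (translate c (p j))
  have hVℓ : ∀ j, (V j).totalDegree ≤ ℓ := fun j =>
    (hVdeg j).trans ((totalDegree_translate_le _ _).trans (hp j))
  refine ⟨fun i => translate (-c) ((V ⨯₃ X) i), translate (-c) (divergence V),
    fun i => (totalDegree_translate_le _ _).trans (totalDegree_cross_X_le hVℓ i), ?_, fun j => ?_⟩
  · rcases divergence_totalDegree_add_one_le_or_eq_zero hVℓ with h | h
    · exact Or.inl ((Nat.add_le_add_right (totalDegree_translate_le _ _) 1).trans h)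
    · exact Or.inr (by rw [h, map_zero])
  · calc p j = translate (-c) (translate c (p j)) := (translate_neg_translate c (p j)).symm
      _ = translate (-c) (curl (V ⨯₃ X) j + X j * divergence V) := by
        rw [curl_cross_X_add_X_mul_divergence, hV]
      _ = _ := by
        rw [map_add, translate_curl, map_mul, translate_X, Pi.neg_apply, C_neg, ← sub_eq_add_neg]

theorem eq_zero_of_curl_eq_X_sub_C_mul {c : Fin 3 → K} {w : Fin 3 → MvPolynomial (Fin 3) K}
    {q : MvPolynomial (Fin 3) K} (h : ∀ j, curl w j = (X j - C (c j)) * q) : q = 0 := by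
  have hw : curl (fun i => translate c (w i)) = fun j => X j * translate c q := by
    funext j
    rw [← translate_curl, h, map_mul, map_sub, translate_X, translate_C, add_sub_cancel_right]
  have hq : 3 • translate c q + euler (translate c q) = 0 := by
    rw [← divergence_curl (fun i => translate c (w i)), hw, divergence_X_mul, Fintype.card_fin]
  apply translate_injective c
  rw [eq_zero_of_nsmul_add_euler_eq_zero three_ne_zero hq, map_zero]

end Decomposition

end MvPolynomial

theorem eval_vector_injective {ι σ K : Type*} [Field K] [Infinite K] :
    Function.Injective fun (p : ι → MvPolynomial σ K) (x : σ → K) (i : ι) => eval x (p i) :=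
  fun _ _ h => funext fun i => MvPolynomial.funext fun x => congrFun (congrFun h x) i

theorem mem_PvecT_iff {ℓ : ℕ} {v : (Fin 3 → ℝ) → Fin 3 → ℝ} :
    v ∈ PvecT ℓ ↔ ∃ p : Fin 3 → MvPolynomial (Fin 3) ℝ,
      (∀ i, (p i).totalDegree ≤ ℓ) ∧ v = fun x i => eval x (p i) := by
  simp only [PvecT, Set.mem_ofPred_eq, funext_iff]

theorem mem_RolyT_iff {ℓ : ℕ} {r : (Fin 3 → ℝ) → Fin 3 → ℝ} :
    r ∈ RolyT ℓ ↔ ∃ w : Fin 3 → MvPolynomial (Fin 3) ℝ,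
      (∀ i, (w i).totalDegree ≤ ℓ + 1) ∧ r = fun x i => eval x (curl w i) := by
  simp [RolyT, funext_iff, Fin.forall_fin_succ, curl]

theorem mem_RolyCT_iff {ℓ : ℕ} {xT : Fin 3 → ℝ} {c : (Fin 3 → ℝ) → Fin 3 → ℝ} :
    c ∈ RolyCT ℓ xT ↔ ∃ q : MvPolynomial (Fin 3) ℝ, (q.totalDegree + 1 ≤ ℓ ∨ q = 0) ∧
      c = fun x i => eval x ((X i - C (xT i)) * q) := by
  simp [RolyCT, funext_iff]

/-- Direct decomposition `P^ℓ(T)³ = R^ℓ(T) ⊕ R^{c,ℓ}(T)`. -/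
theorem Pvec_direct_sum_Roly_RolyC_3d (ℓ : ℕ) (xT : Fin 3 → ℝ) :
    (∀ v, v ∈ PvecT ℓ ↔ ∃ r ∈ RolyT ℓ, ∃ c ∈ RolyCT ℓ xT, v = r + c) ∧
    (∀ r r' c c', r ∈ RolyT ℓ → r' ∈ RolyT ℓ → c ∈ RolyCT ℓ xT → c' ∈ RolyCT ℓ xT →
      r + c = r' + c' → r = r' ∧ c = c') := by
  refine ⟨fun v => ⟨fun hv => ?_, fun hv => ?_⟩, fun r r' c c' hr hr' hc hc' h => ?_⟩
  · obtain ⟨p, hp, rfl⟩ := mem_PvecT_iff.1 hv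
    obtain ⟨w, q, hw, hq, hpq⟩ := exists_eq_curl_add_X_sub_C_mul xT hp
    refine ⟨_, mem_RolyT_iff.2 ⟨w, hw, rfl⟩, _, mem_RolyCT_iff.2 ⟨q, hq, rfl⟩, ?_⟩
    funext x i
    simp [hpq i]
  · obtain ⟨r, hr, c, hc, rfl⟩ := hv
    obtain ⟨w, hw, rfl⟩ := mem_RolyT_iff.1 hr
    obtain ⟨q, hq, rfl⟩ := mem_RolyCT_iff.1 hc
    refine mem_PvecT_iff.2 ⟨fun i => curl w i + (X i - C (xT i)) * q, fun i => ?_, ?_⟩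
    · exact (totalDegree_add _ _).trans
        (max_le (totalDegree_curl_le hw i) (totalDegree_X_sub_C_mul_le i _ hq))
    · funext x i
      simp
  · obtain ⟨w, -, rfl⟩ := mem_RolyT_iff.1 hr
    obtain ⟨w', -, rfl⟩ := mem_RolyT_iff.1 hr'
    obtain ⟨q, -, rfl⟩ := mem_RolyCT_iff.1 hc
    obtain ⟨q', -, rfl⟩ := mem_RolyCT_iff.1 hc'
    have hpoly : (fun i => curl w i + (X i - C (xT i)) * q) =
        fun i => curl w' i + (X i - C (xT i)) * q' :=
      eval_vector_injective (by simpa [funext_iff] using h)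
    have hcurl : ∀ j, curl (w - w') j = (X j - C (xT j)) * (q' - q) := fun j => by
      rw [curl_sub, Pi.sub_apply]
      linear_combination congrFun hpoly j
    obtain rfl : q = q' := (sub_eq_zero.1 (eq_zero_of_curl_eq_X_sub_C_mul hcurl)).symm
    exact ⟨add_right_cancel h, rfl⟩
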